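/- Let n be even and d ≥ 0 an integer. Let x : [n] → {−1, 0, +1} be such that at most n/2 coordinates equal +1, at most n/2 coordinates equal −1, at least 6d + 1 coordinates equal 0, and |Σ_{h=1}^{j} x_h| ≤ d + unq(1,j)/2 for every 1 ≤ j ≤ n, where unq(1,j) denotes the number of indices h ≤ j with x_h = 0. Then there exists y : [n] → {−1, +1} with y_h = x_h whenever x_h ≠ 0, Σ_{h=1}^{n} y_h = 0, and |Σ_{h=1}^{j} y_h| > d for some 1 ≤ j ≤ n. -/

import Mathlib

/-!
If `#{x = 1} + k ≤ n / 2`, fill the zeros of the shortest prefix containing `k` of them with `+1`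
and complete the remaining zeros to a balanced sequence; that prefix then sums to `disc + k`.
Symmetrically for `-1`, giving `disc - k`. If one sign has room for `k = 4d + 1`, the hypothesis
`|disc| ≤ d + k / 2` makes the corresponding `|disc ± k|` at least `k / 2 - d > d`. Otherwise each
sign occupies more than `n / 2 - 4d - 1` places, so with at least `6d + 1` zeros both have room for
`k = d + 1`, and one of `disc + k`, `k - disc` is at least `k > d`.
-/

open Finset

section Ternary

variable {ι : Type*} {s : Finset ι} {x : ι → ℤ}

lemma sum_eq_card_filter_eq_one_sub_card_filter_eq_neg_one
    (hx : ∀ h ∈ s, x h = -1 ∨ x h = 0 ∨ x h = 1) :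
    ∑ h ∈ s, x h = (#{h ∈ s | x h = 1} : ℤ) - #{h ∈ s | x h = -1} := by
  have hpt : ∀ h ∈ s, x h = (if x h = 1 then 1 else 0) - (if x h = -1 then 1 else 0) := by
    intro h hh
    rcases hx h hh with e | e | e <;> simp [e]
  rw [sum_congr rfl hpt, sum_sub_distrib, sum_boole, sum_boole]

lemma card_filter_eq_one_add_card_filter_eq_neg_one_add_card_filter_eq_zero
    (hx : ∀ h ∈ s, x h = -1 ∨ x h = 0 ∨ x h = 1) :
    #{h ∈ s | x h = 1} + #{h ∈ s | x h = -1} + #{h ∈ s | x h = 0} = #s := by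
  have hpt : ∀ h ∈ s,
      (if x h = 1 then 1 else 0) + (if x h = -1 then 1 else 0) + (if x h = 0 then 1 else 0) = 1 := by
    intro h hh
    rcases hx h hh with e | e | e <;> simp [e]
  rw [card_filter, card_filter, card_filter, ← sum_add_distrib, ← sum_add_distrib,
    sum_congr rfl hpt, card_eq_sum_ones]

end Ternary

lemma exists_card_filter_range_eq_succ {p : ℕ → Prop} [DecidablePred p] {n k : ℕ}
    (hk : k < #{h ∈ range n | p h}) :
    ∃ j, 1 ≤ j ∧ j ≤ n ∧ #{h ∈ range j | p h} = k + 1 := by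
  rw [← Nat.count_eq_card_filter_range] at hk
  refine ⟨Nat.nth p k + 1, by omega, Nat.nth_lt_of_lt_count hk, ?_⟩
  rw [← Nat.count_eq_card_filter_range]
  exact Nat.count_nth_succ fun hf => hk.trans_le (Nat.count_le_card hf n)

def fillZeros (x : ℕ → ℤ) (S : Finset ℕ) (h : ℕ) : ℤ :=
  if x h = 0 then (if h ∈ S then 1 else -1) else x h

lemma sum_fillZeros (x : ℕ → ℤ) (S s : Finset ℕ) :
    ∑ h ∈ s, fillZeros x S h =
      ∑ h ∈ s, x h + 2 * #{h ∈ s | x h = 0 ∧ h ∈ S} - #{h ∈ s | x h = 0} := by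
  have hpt : ∀ h, fillZeros x S h =
      x h + 2 * (if x h = 0 ∧ h ∈ S then 1 else 0) - (if x h = 0 then 1 else 0) := by
    intro h
    unfold fillZeros
    split_ifs <;> simp_all
  simp only [hpt, sum_sub_distrib, sum_add_distrib, ← mul_sum, sum_boole]

def IsBalancedCompletion (n : ℕ) (x y : ℕ → ℤ) : Prop :=
  (∀ h < n, y h = -1 ∨ y h = 1) ∧ (∀ h < n, x h ≠ 0 → y h = x h) ∧ ∑ h ∈ range n, y h = 0

lemma IsBalancedCompletion.neg {n : ℕ} {x y : ℕ → ℤ} (hy : IsBalancedCompletion n (-x) y) :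
    IsBalancedCompletion n x (-y) := by
  obtain ⟨hpm, hagree, hbal⟩ := hy
  refine ⟨fun h hh => ?_, fun h hh hx0 => ?_, by simp [sum_neg_distrib, hbal]⟩
  · rcases hpm h hh with e | e <;> simp [e]
  · simp [hagree h hh (by simpa using hx0)]

lemma exists_isBalancedCompletion_sum_range_eq_add {n j : ℕ} {x : ℕ → ℤ} (hn : Even n)
    (hx : ∀ h < n, x h = -1 ∨ x h = 0 ∨ x h = 1)
    (hminus : #{h ∈ range n | x h = -1} ≤ n / 2) (hjn : j ≤ n)
    (hroom : #{h ∈ range n | x h = 1} + #{h ∈ range j | x h = 0} ≤ n / 2) :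
    ∃ y, IsBalancedCompletion n x y ∧
      ∑ h ∈ range j, y h = ∑ h ∈ range j, x h + #{h ∈ range j | x h = 0} := by
  have hx' : ∀ h ∈ range n, x h = -1 ∨ x h = 0 ∨ x h = 1 := fun h hh => hx h (mem_range.1 hh)
  have hpart := card_filter_eq_one_add_card_filter_eq_neg_one_add_card_filter_eq_zero hx'
  rw [card_range] at hpart
  have hsub : {h ∈ range j | x h = 0} ⊆ {h ∈ range n | x h = 0} :=
    filter_subset_filter _ (range_subset_range.2 hjn)
  -- `S` is the set of zeros filled with `+1`: all zeros of the prefix, and just enough others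
  -- to make the completion balanced.
  obtain ⟨S, hjS, hSZ, hScard⟩ := exists_subsuperset_card_eq hsub
    (n := n / 2 - #{h ∈ range n | x h = 1}) (by omega) (by omega)
  refine ⟨fillZeros x S, ⟨fun h hh => ?_, fun h _ hx0 => if_neg hx0, ?_⟩, ?_⟩
  · rcases hx h hh with e | e | e <;> simp [fillZeros, e, or_comm, em]
  · have hS : {h ∈ range n | x h = 0 ∧ h ∈ S} = S := by
      ext h
      refine ⟨fun hh => (mem_filter.1 hh).2.2, fun hh => ?_⟩
      obtain ⟨hhn, hh0⟩ := mem_filter.1 (hSZ hh)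
      exact mem_filter.2 ⟨hhn, hh0, hh⟩
    have hPS : #{h ∈ range n | x h = 1} ≤ n / 2 := by omega
    rw [sum_fillZeros, hS, hScard, sum_eq_card_filter_eq_one_sub_card_filter_eq_neg_one hx']
    obtain ⟨m, rfl⟩ := hn
    push_cast [Nat.cast_sub hPS]
    omega
  · have hS : {h ∈ range j | x h = 0 ∧ h ∈ S} = {h ∈ range j | x h = 0} :=
      filter_congr fun h hh => and_iff_left_of_imp fun hh0 => hjS (mem_filter.2 ⟨hh, hh0⟩)
    rw [sum_fillZeros, hS]
    ring

lemma exists_isBalancedCompletion_sum_range_eq_sub {n j : ℕ} {x : ℕ → ℤ} (hn : Even n)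
    (hx : ∀ h < n, x h = -1 ∨ x h = 0 ∨ x h = 1)
    (hplus : #{h ∈ range n | x h = 1} ≤ n / 2) (hjn : j ≤ n)
    (hroom : #{h ∈ range n | x h = -1} + #{h ∈ range j | x h = 0} ≤ n / 2) :
    ∃ y, IsBalancedCompletion n x y ∧
      ∑ h ∈ range j, y h = ∑ h ∈ range j, x h - #{h ∈ range j | x h = 0} := by
  have hneg : ∀ (s : Finset ℕ) (c : ℤ), {h ∈ s | -x h = c} = {h ∈ s | x h = -c} :=
    fun s c => filter_congr fun h _ => neg_eq_iff_eq_neg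
  obtain ⟨y, hy, hsum⟩ := exists_isBalancedCompletion_sum_range_eq_add (x := -x) hn
    (fun h hh => by rcases hx h hh with e | e | e <;> simp [e])
    (by simpa only [Pi.neg_apply, hneg, neg_neg] using hplus) hjn
    (by simpa only [Pi.neg_apply, hneg, neg_neg, neg_zero] using hroom)
  refine ⟨-y, hy.neg, ?_⟩
  simp only [Pi.neg_apply, sum_neg_distrib, hneg, neg_zero] at hsum ⊢
  rw [hsum]
  ring

lemma exists_isBalancedCompletion_lt_abs_sum_range {n j : ℕ} {d : ℤ} {x : ℕ → ℤ} (hn : Even n)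
    (hx : ∀ h < n, x h = -1 ∨ x h = 0 ∨ x h = 1)
    (hplus : #{h ∈ range n | x h = 1} ≤ n / 2) (hminus : #{h ∈ range n | x h = -1} ≤ n / 2)
    (hjn : j ≤ n)
    (hroom : (#{h ∈ range n | x h = 1} + #{h ∈ range j | x h = 0} ≤ n / 2 ∧
        d < ∑ h ∈ range j, x h + #{h ∈ range j | x h = 0}) ∨
      (#{h ∈ range n | x h = -1} + #{h ∈ range j | x h = 0} ≤ n / 2 ∧
        d < #{h ∈ range j | x h = 0} - ∑ h ∈ range j, x h)) :
    ∃ y, IsBalancedCompletion n x y ∧ d < |∑ h ∈ range j, y h| := by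
  rcases hroom with ⟨hroom, hlt⟩ | ⟨hroom, hlt⟩
  · obtain ⟨y, hy, hsum⟩ := exists_isBalancedCompletion_sum_range_eq_add hn hx hminus hjn hroom
    exact ⟨y, hy, lt_abs.2 (Or.inl (hsum ▸ hlt))⟩
  · obtain ⟨y, hy, hsum⟩ := exists_isBalancedCompletion_sum_range_eq_sub hn hx hplus hjn hroom
    exact ⟨y, hy, lt_abs.2 (Or.inr (by rw [hsum]; linarith))⟩

theorem stmt_14 (n : ℕ) (hn : Even n) (d : ℕ) (x : ℕ → ℤ)
    (hx : ∀ h < n, x h = -1 ∨ x h = 0 ∨ x h = 1)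
    (hplus : ((Finset.range n).filter fun h => x h = 1).card ≤ n / 2)
    (hminus : ((Finset.range n).filter fun h => x h = -1).card ≤ n / 2)
    (hunq : 6 * d + 1 ≤ ((Finset.range n).filter fun h => x h = 0).card)
    (hdisc : ∀ j, 1 ≤ j → j ≤ n →
      2 * |∑ h ∈ Finset.range j, x h| ≤
        2 * (d : ℤ) + ((Finset.range j).filter fun h => x h = 0).card) :
    ∃ y : ℕ → ℤ, (∀ h < n, y h = -1 ∨ y h = 1) ∧
      (∀ h < n, x h ≠ 0 → y h = x h) ∧
      (∑ h ∈ Finset.range n, y h = 0) ∧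
      ∃ j, 1 ≤ j ∧ j ≤ n ∧ (d : ℤ) < |∑ h ∈ Finset.range j, y h| := by
  suffices ∃ j, 1 ≤ j ∧ j ≤ n ∧ ∃ y, IsBalancedCompletion n x y ∧
      (d : ℤ) < |∑ h ∈ range j, y h| by
    obtain ⟨j, hj1, hjn, y, ⟨hpm, hagree, hbal⟩, hlt⟩ := this
    exact ⟨y, hpm, hagree, hbal, j, hj1, hjn, hlt⟩
  have hpart := card_filter_eq_one_add_card_filter_eq_neg_one_add_card_filter_eq_zero
    (fun h hh => hx h (mem_range.1 hh))
  rw [card_range] at hpart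
  have hhalf : n / 2 + n / 2 = n := by obtain ⟨m, rfl⟩ := hn; omega
  by_cases hroom : #{h ∈ range n | x h = 1} + (4 * d + 1) ≤ n / 2 ∨
      #{h ∈ range n | x h = -1} + (4 * d + 1) ≤ n / 2
  · obtain ⟨j, hj1, hjn, hZj⟩ := exists_card_filter_range_eq_succ
      (p := fun h => x h = 0) (n := n) (k := 4 * d) (by omega)
    refine ⟨j, hj1, hjn, exists_isBalancedCompletion_lt_abs_sum_range hn hx hplus hminus hjn ?_⟩
    have hd := hdisc j hj1 hjn
    rcases abs_cases (∑ h ∈ range j, x h) with ⟨habs, _⟩ | ⟨habs, _⟩ <;> omega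
  · obtain ⟨j, hj1, hjn, hZj⟩ := exists_card_filter_range_eq_succ
      (p := fun h => x h = 0) (n := n) (k := d) (by omega)
    refine ⟨j, hj1, hjn, exists_isBalancedCompletion_lt_abs_sum_range hn hx hplus hminus hjn ?_⟩
    omega
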